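/- Let G be a finite group with subgroups H ⊴ A ≤ G (H normal in A), and let r be an integer with 0 ≤ r ≤ |A:H| − 1. Then A is an (r,0)-regular set of the pair (G,H) if and only if gcd(2, |A:H| − 1) divides r. -/

import Mathlib

/-!
Put `Q = A ⧸ H`. In a coset graph `Cos(G,H,U)` the cosets inside `A` adjacent to `aH` are the
translates by `aH` of `(U ∩ A)/H`, an inverse-closed subset of `Q` avoiding `1`; conversely,
the preimage in `A` of such a subset of `Q` is a connection set contained in `A`, so that no
vertex outside `A` sees `A`. Hence `A` is an `(r,0)`-regular set of `(G,H)` iff `Q` has an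
inverse-closed subset of size `r` avoiding `1`. Inversion pairs up the elements of such a subset
that are not involutions; if `|Q|` is odd there are no involutions, so `r` must be even. For the
converse, shrink `Q ∖ {1}` two elements at a time, after first removing an involution (which
exists by Cauchy's theorem) when `r` and `|Q| - 1` have different parities.
-/

open scoped Pointwise

/-- A subset `C` of the vertices of a graph `Γ` is an `(r,s)`-regular set if every vertex
in `C` has exactly `r` neighbours in `C` and every vertex outside `C` has exactly `s`
neighbours in `C`. -/
def IsRegularVertexSet {V : Type*} (Γ : SimpleGraph V) (C : Set V) (r s : ℕ) : Prop :=
  (∀ v ∈ C, {w | w ∈ C ∧ Γ.Adj v w}.ncard = r) ∧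
  ∀ v ∉ C, {w | w ∈ C ∧ Γ.Adj v w}.ncard = s

/-- The coset graph `Cos(G,H,U)` on the left cosets of `H` in `G`:
`g₁H` and `g₂H` are adjacent iff `g₁⁻¹ g₂ ∈ U`. -/
def cosetGraph {G : Type*} [Group G] (H : Subgroup G) (U : Set G) : SimpleGraph (G ⧸ H) :=
  SimpleGraph.fromRel fun C D =>
    ∃ g₁ g₂ : G, QuotientGroup.mk g₁ = C ∧ QuotientGroup.mk g₂ = D ∧ g₁⁻¹ * g₂ ∈ U

/-- `U` is a valid connection set for a coset graph `Cos(G,H,U)`: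
inverse-closed, disjoint from `H`, and a union of double cosets of `H` (`HUH = U`). -/
def IsCosetGraphConnectionSet {G : Type*} [Group G] (H : Subgroup G) (U : Set G) : Prop :=
  U⁻¹ = U ∧ (H : Set G) ∩ U = ∅ ∧ (H : Set G) * U * (H : Set G) = U

/-- `A` is an `(r,s)`-regular set of the pair `(G,H)`: there is a coset graph
`Cos(G,H,U)` in which the set of left cosets of `H` in `A` is an `(r,s)`-regular set. -/
def IsRegularSetOfPair {G : Type*} [Group G] (H A : Subgroup G) (r s : ℕ) : Prop :=
  ∃ U : Set G, IsCosetGraphConnectionSet H U ∧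
    IsRegularVertexSet (cosetGraph H U)
      {C : G ⧸ H | ∃ a ∈ A, QuotientGroup.mk a = C} r s

/-- `A` is a perfect code of the pair `(G,H)` iff it is a `(0,1)`-regular set of `(G,H)`. -/
def IsPerfectCodeOfPair {G : Type*} [Group G] (H A : Subgroup G) : Prop :=
  IsRegularSetOfPair H A 0 1

/-- A subgroup `A` is an `(r,s)`-regular set of `G` iff it is an `(r,s)`-regular set of
the pair `(G,1)`, i.e. an `(r,s)`-regular set in some Cayley graph of `G`. -/
def IsRegularSetOfGroup {G : Type*} [Group G] (A : Subgroup G) (r s : ℕ) : Prop :=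
  IsRegularSetOfPair ⊥ A r s

/-- A subgroup `A` is a perfect code of `G` iff it is a `(0,1)`-regular set of `G`. -/
def IsPerfectCodeOfGroup {G : Type*} [Group G] (A : Subgroup G) : Prop :=
  IsRegularSetOfGroup A 0 1

/-- The conjugate subgroup `K^t = t⁻¹ K t`. -/
def conjSub {G : Type*} [Group G] (K : Subgroup G) (t : G) : Subgroup G :=
  K.map (MulAut.conj t⁻¹).toMonoidHom

namespace Set

variable {α : Type*} [InvolutiveInv α]

theorem even_ncard_of_inv_eq_of_inv_ne {S : Set α} (hS : S⁻¹ = S) (hne : ∀ x ∈ S, x⁻¹ ≠ x) :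
    Even S.ncard := by
  rcases S.finite_or_infinite with hfin | hinf
  · obtain ⟨T, rfl⟩ := hfin.exists_finset_coe
    have hT : ∀ x ∈ T, x⁻¹ ∈ T := fun x hx => by
      rw [← Finset.mem_coe, ← hS]
      simpa using hx
    rw [ncard_coe_finset, ← ZMod.natCast_eq_zero_iff_even, Finset.card_eq_sum_ones,
      Nat.cast_sum, Nat.cast_one]
    exact Finset.sum_involution (fun x _ => x⁻¹) (fun _ _ => by decide)
      (fun x hx _ => hne x hx) hT (fun x _ => inv_inv x)
  · simp [hinf.ncard]

theorem exists_inv_eq_pair_subset {S : Set α} (hS : S⁻¹ = S) (h2 : 1 < S.ncard) :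
    ∃ x ∈ S, ∃ y ∈ S, x ≠ y ∧ ({x, y} : Set α)⁻¹ = {x, y} := by
  by_cases hfix : ∃ x ∈ S, x⁻¹ ≠ x
  · obtain ⟨x, hx, hxx⟩ := hfix
    refine ⟨x, hx, x⁻¹, ?_, hxx.symm, by simp [pair_comm]⟩
    rw [← hS]
    simpa using hx
  · push Not at hfix
    obtain ⟨a, ha, b, hb, hab⟩ := (one_lt_ncard (finite_of_ncard_pos (by omega))).1 h2
    exact ⟨a, ha, b, hb, hab, by simp [hfix a ha, hfix b hb]⟩

theorem exists_inv_eq_subset_ncard_eq {S : Set α} (hS : S⁻¹ = S) {r : ℕ} (hr : r ≤ S.ncard)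
    (hpar : r % 2 = S.ncard % 2) : ∃ T ⊆ S, T⁻¹ = T ∧ T.ncard = r := by
  obtain ⟨k, hk⟩ : ∃ k, S.ncard = r + 2 * k := ⟨(S.ncard - r) / 2, by omega⟩
  induction k generalizing S with
  | zero => exact ⟨S, subset_rfl, hS, by omega⟩
  | succ k ih =>
    obtain ⟨x, hx, y, hy, hxy, hpair⟩ := exists_inv_eq_pair_subset hS (by omega)
    have hcard : (S \ {x, y}).ncard = r + 2 * k := by
      rw [ncard_sdiff (pair_subset hx hy), ncard_pair hxy]
      omega
    obtain ⟨T, hTS, hT⟩ := ih (S := S \ {x, y})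
      (by rw [← inv_preimage, preimage_sdiff, inv_preimage, inv_preimage, hS, hpair])
      (by omega) (by omega) hcard
    exact ⟨T, hTS.trans sdiff_subset, hT⟩

end Set

section FiniteGroup

variable {Q : Type*} [Group Q]

theorem inv_ne_self_of_odd_natCard (hQ : Odd (Nat.card Q)) {x : Q} (hx : x ≠ 1) : x⁻¹ ≠ x := by
  intro hinv
  have h2 : orderOf x ∣ 2 := orderOf_dvd_of_pow_eq_one (by rw [sq, ← inv_eq_iff_mul_eq_one, hinv])
  exact hx (orderOf_eq_one_iff.1 (Nat.eq_one_of_dvd_coprimes hQ.coprime_two_left h2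
    (orderOf_dvd_natCard x)))

theorem exists_inv_eq_ncard_eq_iff [Finite Q] {r : ℕ} (hr : r ≤ Nat.card Q - 1) :
    (∃ S : Set Q, 1 ∉ S ∧ S⁻¹ = S ∧ S.ncard = r) ↔ Nat.gcd 2 (Nat.card Q - 1) ∣ r := by
  have hpos : 0 < Nat.card Q := Nat.card_pos
  constructor
  · rintro ⟨S, hS1, hS, rfl⟩
    rcases Nat.even_or_odd (Nat.card Q) with hQ | hQ
    · have hodd : Odd (Nat.card Q - 1) := by
        obtain ⟨k, hk⟩ := hQ
        exact ⟨k - 1, by omega⟩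
      rw [Nat.Coprime.gcd_eq_one hodd.coprime_two_left]
      exact one_dvd _
    · refine (Nat.gcd_dvd_left 2 _).trans (Set.even_ncard_of_inv_eq_of_inv_ne hS ?_).two_dvd
      exact fun x hx => inv_ne_self_of_odd_natCard hQ (ne_of_mem_of_not_mem hx hS1)
  · intro hdvd
    suffices ∃ F : Set Q, 1 ∈ F ∧ F⁻¹ = F ∧ r ≤ Fᶜ.ncard ∧ r % 2 = Fᶜ.ncard % 2 by
      obtain ⟨F, hF1, hF, hrF, hpar⟩ := this
      obtain ⟨S, hSF, hS, hSr⟩ :=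
        Set.exists_inv_eq_subset_ncard_eq (by rw [Set.compl_inv, hF]) hrF hpar
      exact ⟨S, fun h => hSF h hF1, hS, hSr⟩
    by_cases hpar : r % 2 = (Nat.card Q - 1) % 2
    · refine ⟨{1}, rfl, by simp, ?_, ?_⟩ <;> rw [Set.ncard_compl, Set.ncard_singleton] <;> omega
    · have hQ : 2 ∣ Nat.card Q := by
        by_contra hQ
        rw [Nat.gcd_eq_left (by omega : 2 ∣ Nat.card Q - 1)] at hdvd
        omega
      obtain ⟨t, ht⟩ := exists_prime_orderOf_dvd_card' (G := Q) 2 hQ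
      have ht1 : 1 ≠ t := by
        rintro rfl
        simp at ht
      have htinv : t⁻¹ = t := inv_eq_iff_mul_eq_one.2 (by rw [← sq, ← ht, pow_orderOf_eq_one])
      refine ⟨{1, t}, by simp, by simp [htinv], ?_, ?_⟩ <;>
        rw [Set.ncard_compl, Set.ncard_pair ht1] <;> omega

end FiniteGroup

section CosetGraph

variable {G : Type*} [Group G] {H A : Subgroup G} {U : Set G}

namespace IsCosetGraphConnectionSet

theorem mul_mem_mul (hU : IsCosetGraphConnectionSet H U) {h₁ h₂ u : G} (h₁H : h₁ ∈ H)
    (hu : u ∈ U) (h₂H : h₂ ∈ H) : h₁ * u * h₂ ∈ U :=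
  hU.2.2 ▸ Set.mul_mem_mul (Set.mul_mem_mul h₁H hu) h₂H

theorem notMem_of_mem_subgroup (hU : IsCosetGraphConnectionSet H U) {h : G} (hH : h ∈ H) :
    h ∉ U :=
  fun hu => (hU.2.1.subset ⟨hH, hu⟩ : h ∈ (∅ : Set G))

theorem cosetGraph_adj_mk (hU : IsCosetGraphConnectionSet H U) (a b : G) :
    (cosetGraph H U).Adj (QuotientGroup.mk a) (QuotientGroup.mk b) ↔ a⁻¹ * b ∈ U := by
  have hmk : ∀ {a b g₁ g₂ : G}, (g₁ : G ⧸ H) = a → (g₂ : G ⧸ H) = b → g₁⁻¹ * g₂ ∈ U →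
      a⁻¹ * b ∈ U := by
    intro a b g₁ g₂ h₁ h₂ hu
    have := hU.mul_mem_mul (QuotientGroup.eq.1 h₁.symm) hu (QuotientGroup.eq.1 h₂)
    rwa [show a⁻¹ * g₁ * (g₁⁻¹ * g₂) * (g₂⁻¹ * b) = a⁻¹ * b by group] at this
  constructor
  · rintro ⟨-, ⟨g₁, g₂, h₁, h₂, hu⟩ | ⟨g₁, g₂, h₁, h₂, hu⟩⟩
    · exact hmk h₁ h₂ hu
    · rw [← hU.1, Set.mem_inv, mul_inv_rev, inv_inv]
      exact hmk h₁ h₂ hu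
  · intro h
    exact ⟨fun hab => hU.notMem_of_mem_subgroup (QuotientGroup.eq.1 hab) h,
      Or.inl ⟨a, b, rfl, rfl, h⟩⟩

theorem mk_mem_image_iff (hU : IsCosetGraphConnectionSet H U) (b : A) :
    (b : A ⧸ H.subgroupOf A) ∈ QuotientGroup.mk '' ((↑) ⁻¹' U : Set A) ↔ (b : G) ∈ U := by
  refine ⟨?_, fun hb => ⟨b, hb, rfl⟩⟩
  rintro ⟨c, hc, hcb⟩
  have := hU.mul_mem_mul H.one_mem hc (Subgroup.mem_subgroupOf.1 (QuotientGroup.eq.1 hcb))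
  simpa using this

end IsCosetGraphConnectionSet

def Subgroup.quotientSubgroupOfEmbedding (H A : Subgroup G) : A ⧸ H.subgroupOf A ↪ G ⧸ H where
  toFun := Quotient.map' Subtype.val fun _ _ h => by
    rwa [QuotientGroup.leftRel_apply] at h ⊢
  inj' := Quotient.ind₂' fun _ _ h =>
    QuotientGroup.eq.2 (Subgroup.mem_subgroupOf.2 (QuotientGroup.eq.1 h))

variable [(H.subgroupOf A).Normal]

theorem IsCosetGraphConnectionSet.ncard_adj_eq (hU : IsCosetGraphConnectionSet H U) (a : A) :
    {w | w ∈ {C : G ⧸ H | ∃ a ∈ A, QuotientGroup.mk a = C} ∧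
        (cosetGraph H U).Adj ((a : G) : G ⧸ H) w}.ncard =
      (QuotientGroup.mk '' ((↑) ⁻¹' U : Set A) : Set (A ⧸ H.subgroupOf A)).ncard := by
  rw [← Set.ncard_image_of_injective _
    ((H.quotientSubgroupOfEmbedding A).injective.comp (mul_right_injective (a : A ⧸ _)))]
  congr 1
  ext w
  simp only [Set.mem_ofPred_eq, Set.mem_image, Function.comp_apply]
  constructor
  · rintro ⟨⟨b, hb, rfl⟩, hadj⟩
    refine ⟨_, ⟨a⁻¹ * ⟨b, hb⟩, (hU.cosetGraph_adj_mk _ _).1 hadj, rfl⟩, ?_⟩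
    rw [← QuotientGroup.mk_mul, mul_inv_cancel_left]
    rfl
  · rintro ⟨_, ⟨c, hc, rfl⟩, rfl⟩
    refine ⟨⟨a * c, (a * c).2, rfl⟩, (hU.cosetGraph_adj_mk _ _).2 ?_⟩
    simpa using hc

theorem isCosetGraphConnectionSet_image_preimage_mk (hHA : H ≤ A)
    {S : Set (A ⧸ H.subgroupOf A)} (hS1 : 1 ∉ S) (hS : S⁻¹ = S) :
    IsCosetGraphConnectionSet H ((↑) '' (QuotientGroup.mk ⁻¹' S : Set A)) := by
  have hinv : ((↑) '' (QuotientGroup.mk ⁻¹' S : Set A) : Set G) ⊆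
      ((↑) '' (QuotientGroup.mk ⁻¹' S : Set A))⁻¹ := by
    rintro _ ⟨b, hb, rfl⟩
    refine ⟨b⁻¹, ?_, rfl⟩
    rw [Set.mem_preimage, QuotientGroup.mk_inv, ← Set.mem_inv, hS]
    exact hb
  have hmk {h : G} (hh : h ∈ H) : ((⟨h, hHA hh⟩ : A) : A ⧸ H.subgroupOf A) = 1 :=
    (QuotientGroup.eq_one_iff _).2 hh
  refine ⟨le_antisymm (Set.inv_subset.2 hinv) hinv, ?_, ?_⟩
  · refine Set.eq_empty_of_forall_notMem ?_
    rintro _ ⟨hbH, b, hb, rfl⟩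
    exact hS1 (hmk hbH ▸ hb)
  · refine le_antisymm ?_ fun u hu => ?_
    · rintro _ ⟨_, ⟨h₁, hh₁, _, ⟨b, hb, rfl⟩, rfl⟩, h₂, hh₂, rfl⟩
      refine ⟨⟨h₁, hHA hh₁⟩ * b * ⟨h₂, hHA hh₂⟩, ?_, rfl⟩
      rwa [Set.mem_preimage, QuotientGroup.mk_mul, QuotientGroup.mk_mul, hmk hh₁, hmk hh₂,
        one_mul, mul_one]
    · simpa using Set.mul_mem_mul (Set.mul_mem_mul H.one_mem hu) H.one_mem

theorem isRegularSetOfPair_zero_iff {r : ℕ} (hHA : H ≤ A) :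
    IsRegularSetOfPair H A r 0 ↔
      ∃ S : Set (A ⧸ H.subgroupOf A), 1 ∉ S ∧ S⁻¹ = S ∧ S.ncard = r := by
  constructor
  · rintro ⟨U, hU, hreg, -⟩
    refine ⟨QuotientGroup.mk '' ((↑) ⁻¹' U), ?_, ?_, ?_⟩
    · rintro ⟨b, hb, hb1⟩
      exact hU.notMem_of_mem_subgroup
        (Subgroup.mem_subgroupOf.1 ((QuotientGroup.eq_one_iff b).1 hb1)) hb
    · ext q
      induction q using QuotientGroup.induction_on with | H b => ?_
      rw [Set.mem_inv, ← QuotientGroup.mk_inv, hU.mk_mem_image_iff, hU.mk_mem_image_iff,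
        Subgroup.coe_inv, ← Set.mem_inv, hU.1]
    · rw [← hU.ncard_adj_eq 1]
      exact hreg (QuotientGroup.mk 1) ⟨1, A.one_mem, rfl⟩
  · rintro ⟨S, hS1, hS, rfl⟩
    have hU := isCosetGraphConnectionSet_image_preimage_mk hHA hS1 hS
    refine ⟨_, hU, ?_, ?_⟩
    · rintro _ ⟨a, ha, rfl⟩
      rw [hU.ncard_adj_eq ⟨a, ha⟩, Subtype.val_injective.preimage_image,
        Set.image_preimage_eq _ QuotientGroup.mk_surjective]
    · intro v hv
      convert Set.ncard_empty (G ⧸ H)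
      refine Set.eq_empty_of_forall_notMem ?_
      rintro _ ⟨⟨b, hb, rfl⟩, hadj⟩
      induction v using QuotientGroup.induction_on with | H g => ?_
      obtain ⟨c, -, hc⟩ := (hU.cosetGraph_adj_mk g b).1 hadj
      have hgb : g⁻¹ * b ∈ A := hc ▸ c.2
      exact hv ⟨g, by simpa using A.mul_mem hb (A.inv_mem hgb), rfl⟩

end CosetGraph

/-- **Lemma (key3).** Let `H ⊴ A ≤ G` and `0 ≤ r ≤ |A:H| − 1`. Then `A` is an
`(r,0)`-regular set of `(G,H)` iff `gcd(2, |A:H| − 1)` divides `r`. -/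
theorem lemma_key3 {G : Type*} [Group G] [Fintype G] (H A : Subgroup G) (hHA : H ≤ A)
    (hHnA : (H.subgroupOf A).Normal) (r : ℕ) (hr : r ≤ H.relIndex A - 1) :
    IsRegularSetOfPair H A r 0 ↔ Nat.gcd 2 (H.relIndex A - 1) ∣ r := by
  rw [isRegularSetOfPair_zero_iff hHA]
  exact exists_inv_eq_ncard_eq_iff hr
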